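/- For every positive class S, there exists a unique positive equilibrium in S; that is, the set S ∩ E₊ consists of exactly one point x̄_S. -/

import Mathlib

/-!
Write `f(x) = B L ψ(x)`, where `L = A - diag(column sums of A)` is the Laplacian of the complex
graph and `ψ_j(x) = ∏ₗ θ(xₗ)^{B_{lj}}`. The kernel of `L` is spanned by a positive vector `ρ`
(Perron–Frobenius for the irreducible `A`), and `B` is injective, so a positive `x` is an
equilibrium iff `ψ(x) ∈ ℝ ρ`. Choosing `y` with `Bᵀ y = log ρ`, this says that
`log θ(x) - y ⊥ D`. That vector is the gradient of the convex, coercive function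
`g(x) = ∑ₗ (∫₀^{xₗ} log θ - yₗ xₗ)`, whose slope is `-∞` at the boundary of the orthant, so `g`
has a positive minimiser on the class `S`, which is an equilibrium. Two positive equilibria
`x, z ∈ S` satisfy `∑ₖ (zₖ - xₖ)(log θ(zₖ) - log θ(xₖ)) = 0`, so `z = x` by monotonicity.
-/

open Set Filter Topology MeasureTheory Matrix

lemma Submodule.mem_orthogonal_span_iff {𝕜 E : Type*} [RCLike 𝕜] [NormedAddCommGroup E]
    [InnerProductSpace 𝕜 E] {s : Set E} {v : E} :
    v ∈ (Submodule.span 𝕜 s)ᗮ ↔ ∀ u ∈ s, inner 𝕜 u v = 0 := by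
  refine ⟨fun h u hu => inner_right_of_mem_orthogonal (subset_span hu) h, fun h => ?_⟩
  refine (mem_orthogonal _ _).2 fun u hu => ?_
  induction hu using Submodule.span_induction with
  | mem u hu => exact h u hu
  | zero => exact inner_zero_left _
  | add u w _ _ hu hw => rw [inner_add_left, hu, hw, add_zero]
  | smul c u _ hu => rw [inner_smul_left, hu, mul_zero]

lemma Filter.Tendsto.sum_atBot {α ι : Type*} [Fintype ι] {l : Filter α} {F : ι → α → ℝ}
    (hF : ∀ i, IsBoundedUnder (· ≤ ·) l (F i)) {k : ι} (hk : Tendsto (F k) l atBot) :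
    Tendsto (fun a => ∑ i, F i a) l atBot := by
  classical
  choose C hC using hF
  simp_rw [← Finset.add_sum_erase _ _ (Finset.mem_univ k)]
  refine tendsto_atBot_add_right_of_ge' _ (∑ i ∈ Finset.univ.erase k, C i) hk ?_
  filter_upwards [eventually_all.2 fun i => eventually_map.1 (hC i)] with a ha
  exact Finset.sum_le_sum fun i _ => ha i

lemma StrictMonoOn.sub_mul_sub_pos {φ : ℝ → ℝ} {s : Set ℝ} (hφ : StrictMonoOn φ s) {a b : ℝ}
    (ha : a ∈ s) (hb : b ∈ s) (hab : a ≠ b) : 0 < (a - b) * (φ a - φ b) := by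
  rcases hab.lt_or_gt with h | h
  · exact mul_pos_of_neg_of_neg (sub_neg.2 h) (sub_neg.2 (hφ ha hb h))
  · exact mul_pos (sub_pos.2 h) (sub_pos.2 (hφ hb ha h))

lemma exists_eq_smul_iff_exists_log_sub_log {κ : Type*} {ψ ρ : κ → ℝ} (hψ : ∀ j, 0 < ψ j)
    (hρ : ∀ j, 0 < ρ j) :
    (∃ t : ℝ, ψ = t • ρ) ↔ ∃ c, ∀ j, Real.log (ψ j) - Real.log (ρ j) = c := by
  constructor
  · rintro ⟨t, rfl⟩
    refine ⟨Real.log t, fun j => ?_⟩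
    have ht : t ≠ 0 := by rintro rfl; simpa using hψ j
    rw [Pi.smul_apply, smul_eq_mul, Real.log_mul ht (hρ j).ne', add_sub_cancel_right]
  · rintro ⟨c, hc⟩
    refine ⟨Real.exp c, funext fun j => ?_⟩
    rw [Pi.smul_apply, smul_eq_mul, ← hc j, Real.exp_sub, Real.exp_log (hψ j),
      Real.exp_log (hρ j), div_mul_cancel₀ _ (hρ j).ne']

namespace Matrix

section Rank

variable {ι κ : Type*} [Fintype ι]

lemma mulVec_injective_of_rank_eq_card {B : Matrix κ ι ℝ} (hB : B.rank = Fintype.card ι) :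
    Function.Injective B.mulVec := by
  rw [mulVec_injective_iff, linearIndependent_iff_card_eq_finrank_span, Set.finrank,
    ← rank_eq_finrank_span_cols, hB]

lemma vecMul_surjective_of_rank_eq_card [Fintype κ] {B : Matrix κ ι ℝ}
    (hB : B.rank = Fintype.card ι) : Function.Surjective B.vecMul := by
  have hrange : LinearMap.range Bᵀ.mulVecLin = ⊤ := Submodule.eq_top_of_finrank_eq <| by
    rw [← rank, rank_transpose, hB, Module.finrank_fintype_fun_eq_card]
  intro w
  obtain ⟨v, hv⟩ := LinearMap.range_eq_top.1 hrange w
  exact ⟨v, by rwa [mulVecLin_apply, mulVec_transpose] at hv⟩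

end Rank

section Laplacian

variable {ι : Type*} [Fintype ι] [DecidableEq ι]

open Finset

def laplacian (A : Matrix ι ι ℝ) : Matrix ι ι ℝ := A - diagonal fun j => ∑ i, A i j

lemma laplacian_mulVec_apply (A : Matrix ι ι ℝ) (v : ι → ℝ) (i : ι) :
    (laplacian A *ᵥ v) i = ∑ j, A i j * v j - (∑ k, A k i) * v i := by
  rw [laplacian, sub_mulVec, Pi.sub_apply, mulVec_diagonal]
  rfl

lemma one_vecMul_laplacian (A : Matrix ι ι ℝ) : (1 : ι → ℝ) ᵥ* laplacian A = 0 := by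
  ext j
  simp [laplacian, vecMul, dotProduct, diagonal_apply]

lemma sum_laplacian_mulVec (A : Matrix ι ι ℝ) (v : ι → ℝ) : ∑ i, (laplacian A *ᵥ v) i = 0 := by
  simpa [dotProduct] using (dotProduct_mulVec 1 (laplacian A) v).trans
    (by rw [one_vecMul_laplacian, zero_dotProduct])

lemma laplacian_mulVec_abs {A : Matrix ι ι ℝ} (hA : ∀ i j, 0 ≤ A i j) {v : ι → ℝ}
    (hv : laplacian A *ᵥ v = 0) : laplacian A *ᵥ |v| = 0 := by
  have hnonneg : ∀ i, 0 ≤ (laplacian A *ᵥ |v|) i := by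
    intro i
    have hvi := congrFun hv i
    rw [laplacian_mulVec_apply, Pi.zero_apply, sub_eq_zero] at hvi
    rw [laplacian_mulVec_apply, sub_nonneg]
    calc (∑ k, A k i) * |v| i = |∑ j, A i j * v j| := by
          rw [hvi, abs_mul, abs_of_nonneg (sum_nonneg fun k _ => hA k i), Pi.abs_apply]
      _ ≤ ∑ j, |A i j * v j| := abs_sum_le_sum_abs _ _
      _ = ∑ j, A i j * |v| j := by simp [abs_mul, abs_of_nonneg (hA _ _)]
  ext i
  exact (sum_eq_zero_iff_of_nonneg fun i _ => hnonneg i).1 (sum_laplacian_mulVec A |v|) i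
    (mem_univ i)

lemma pow_apply_eq_zero_of_forall {M : Matrix ι ι ℝ} {P : ι → Prop}
    (hM : ∀ i j, P i → ¬ P j → M i j = 0) (k : ℕ) {i j : ι} (hi : P i) (hj : ¬ P j) :
    (M ^ k) i j = 0 := by
  induction k generalizing j with
  | zero => exact one_apply_ne (fun h => hj (h ▸ hi))
  | succ k ih =>
    rw [pow_succ, mul_apply]
    refine sum_eq_zero fun l _ => ?_
    by_cases hl : P l
    · rw [hM l j hl hj, mul_zero]
    · rw [ih hl, zero_mul]

lemma pos_of_laplacian_mulVec_eq_zero {A : Matrix ι ι ℝ} (hA : ∀ i j, 0 ≤ A i j) {k : ℕ}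
    (hirr : ∀ i j, 0 < ((1 + A) ^ k) i j) {u : ι → ℝ} (hu : 0 ≤ u) (hu0 : u ≠ 0)
    (hLu : laplacian A *ᵥ u = 0) (i : ι) : 0 < u i := by
  by_contra! hi
  obtain ⟨j, hj⟩ : ∃ j, u j ≠ 0 := Function.ne_iff.1 hu0
  -- the zero set of `u` has no outgoing edge, hence neither has it for any power of `1 + A`
  have hclosed : ∀ a b, u a = 0 → ¬ u b = 0 → (1 + A) a b = 0 := by
    intro a b ha hb
    have hsum : ∑ c, A a c * u c = 0 := by
      simpa [laplacian_mulVec_apply, ha] using congrFun hLu a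
    have hab := (sum_eq_zero_iff_of_nonneg fun c _ => mul_nonneg (hA a c) (hu c)).1 hsum b
      (mem_univ b)
    rw [add_apply, one_apply_ne (by rintro rfl; exact hb ha), zero_add]
    exact (mul_eq_zero.1 hab).resolve_right hb
  exact (hirr i j).ne' (pow_apply_eq_zero_of_forall hclosed k (le_antisymm hi (hu i)) hj)

theorem exists_pos_ker_laplacian [Nonempty ι] {A : Matrix ι ι ℝ} (hA : ∀ i j, 0 ≤ A i j)
    {k : ℕ} (hirr : ∀ i j, 0 < ((1 + A) ^ k) i j) :
    ∃ ρ : ι → ℝ, (∀ j, 0 < ρ j) ∧ ∀ ψ, laplacian A *ᵥ ψ = 0 ↔ ∃ t : ℝ, ψ = t • ρ := by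
  have hdet : (laplacian A).det = 0 :=
    exists_vecMul_eq_zero_iff.1 ⟨1, one_ne_zero, one_vecMul_laplacian A⟩
  obtain ⟨v, hv0, hv⟩ := exists_mulVec_eq_zero_iff.2 hdet
  have habs : laplacian A *ᵥ |v| = 0 := laplacian_mulVec_abs hA hv
  have hρpos := pos_of_laplacian_mulVec_eq_zero hA hirr (abs_nonneg v) (by simpa using hv0) habs
  refine ⟨|v|, hρpos, fun ψ => ⟨fun hψ => ?_, ?_⟩⟩
  · -- subtract the largest multiple of `|v|` that stays below `ψ`
    obtain ⟨j₀, -, hj₀⟩ := exists_min_image univ (fun j => ψ j / |v| j) univ_nonempty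
    set t := ψ j₀ / |v| j₀
    have hu : 0 ≤ ψ - t • |v| := fun j => by
      have hj := hρpos j
      simp only [Pi.abs_apply] at hj
      simpa [sub_nonneg, ← le_div_iff₀ hj] using hj₀ j (mem_univ j)
    have hLu : laplacian A *ᵥ (ψ - t • |v|) = 0 := by
      rw [mulVec_sub, mulVec_smul, hψ, habs, smul_zero, sub_zero]
    refine ⟨t, sub_eq_zero.1 (not_not.1 fun hne => ?_)⟩
    refine (pos_of_laplacian_mulVec_eq_zero hA hirr hu hne hLu j₀).ne' ?_
    simp [t, div_mul_cancel₀ _ (by simpa using (hρpos j₀).ne' : |v j₀| ≠ 0)]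
  · rintro ⟨t, rfl⟩
    rw [mulVec_smul, habs, smul_zero]

lemma sum_sum_mul_sub_eq_mulVec_laplacian {κ : Type*} (A : Matrix ι ι ℝ) (B : Matrix κ ι ℝ)
    (ψ : ι → ℝ) (k : κ) :
    ∑ i, ∑ j, A i j * ψ j * (B k i - B k j) = (B *ᵥ (laplacian A *ᵥ ψ)) k := by
  have hout : ∑ i, ∑ j, A i j * ψ j * B k j = ∑ i, (∑ j, A j i) * ψ i * B k i := by
    rw [sum_comm]; simp only [sum_mul]
  change _ = ∑ i, B k i * (laplacian A *ᵥ ψ) i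
  simp only [mul_sub, sum_sub_distrib, hout, laplacian_mulVec_apply, mul_sum]
  congr 1
  · exact sum_congr rfl fun i _ => sum_congr rfl fun j _ => by ring
  · exact sum_congr rfl fun i _ => by ring

end Laplacian

end Matrix

section Primitive

variable {φ : ℝ → ℝ}

lemma intervalIntegrable_of_nonneg (hφc : ContinuousOn φ (Ioi 0)) (hφi : IntegrableOn φ (Ioc 0 1))
    {a b : ℝ} (ha : 0 ≤ a) (hb : 0 ≤ b) : IntervalIntegrable φ volume a b := by
  set M := max 1 (max a b)
  have hM : IntervalIntegrable φ volume 0 M :=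
    ((intervalIntegrable_iff_integrableOn_Ioc_of_le zero_le_one).2 hφi).trans
      (hφc.mono fun t ht => (lt_min one_pos (one_pos.trans_le (le_max_left _ _))).trans_le ht.1
        ).intervalIntegrable
  exact hM.mono_set (uIcc_subset_uIcc (mem_uIcc_of_le ha (by simp [M]))
    (mem_uIcc_of_le hb (by simp [M])))

lemma hasDerivAt_integral_of_pos (hφc : ContinuousOn φ (Ioi 0)) (hφi : IntegrableOn φ (Ioc 0 1))
    {s : ℝ} (hs : 0 < s) : HasDerivAt (fun t => ∫ u in (0:ℝ)..t, φ u) (φ s) s :=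
  intervalIntegral.integral_hasDerivAt_right (intervalIntegrable_of_nonneg hφc hφi le_rfl hs.le)
    (hφc.stronglyMeasurableAtFilter isOpen_Ioi s hs) (hφc.continuousAt (Ioi_mem_nhds hs))

lemma continuousOn_integral (hφc : ContinuousOn φ (Ioi 0)) (hφi : IntegrableOn φ (Ioc 0 1))
    (R : ℝ) : ContinuousOn (fun t => ∫ u in (0:ℝ)..t, φ u) (Icc 0 R) := by
  rcases lt_or_ge R 0 with hR | hR
  · simp [Icc_eq_empty_of_lt hR]
  rw [← uIcc_of_le hR]
  exact intervalIntegral.continuousOn_primitive_interval'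
    (intervalIntegrable_of_nonneg hφc hφi le_rfl hR) left_mem_uIcc

lemma integral_add_mul_sub_le (hφc : ContinuousOn φ (Ioi 0)) (hφi : IntegrableOn φ (Ioc 0 1))
    (hφm : MonotoneOn φ (Ioi 0)) {u s : ℝ} (hu : 0 < u) (hs : 0 ≤ s) :
    (∫ t in (0:ℝ)..u, φ t) + φ u * (s - u) ≤ ∫ t in (0:ℝ)..s, φ t := by
  have hint := fun {a b : ℝ} (ha : 0 ≤ a) (hb : 0 ≤ b) => intervalIntegrable_of_nonneg hφc hφi ha hb
  have hsub := intervalIntegral.integral_interval_sub_left (hint le_rfl hs) (hint le_rfl hu.le)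
  rcases le_total u s with hus | hsu
  · have := intervalIntegral.integral_mono_on hus intervalIntegrable_const (hint hu.le hs)
      fun t ht => hφm hu (hu.trans_le ht.1) ht.1
    rw [intervalIntegral.integral_const, smul_eq_mul] at this
    linarith
  · have := intervalIntegral.integral_mono_on_of_le_Ioo hsu (hint hs hu.le) intervalIntegrable_const
      fun t ht => hφm (hs.trans_lt ht.1) hu ht.2.le
    rw [intervalIntegral.integral_const, smul_eq_mul, intervalIntegral.integral_symm] at this
    linarith

lemma integral_le_mul (hφc : ContinuousOn φ (Ioi 0)) (hφi : IntegrableOn φ (Ioc 0 1))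
    (hφm : MonotoneOn φ (Ioi 0)) {u : ℝ} (hu : 0 < u) : ∫ t in (0:ℝ)..u, φ t ≤ u * φ u := by
  have := integral_add_mul_sub_le hφc hφi hφm hu le_rfl
  rw [intervalIntegral.integral_same] at this
  linarith

lemma tendsto_inv_mul_integral_atBot (hφc : ContinuousOn φ (Ioi 0))
    (hφi : IntegrableOn φ (Ioc 0 1)) (hφm : MonotoneOn φ (Ioi 0))
    (hφ0 : Tendsto φ (𝓝[>] 0) atBot) {b : ℝ} (hb : 0 < b) :
    Tendsto (fun t => t⁻¹ * ∫ u in (0:ℝ)..t * b, φ u) (𝓝[>] 0) atBot := by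
  have hlin : Tendsto (fun t : ℝ => t * b) (𝓝[>] 0) (𝓝[>] 0) :=
    tendsto_nhdsWithin_of_tendsto_nhds_of_eventually_within _
      (by simpa using ((continuous_mul_const b).tendsto 0).mono_left nhdsWithin_le_nhds)
      (eventually_mem_nhdsWithin.mono fun t (ht : 0 < t) => mul_pos ht hb)
  refine tendsto_atBot_mono' _ ?_ ((hφ0.comp hlin).const_mul_atBot hb)
  filter_upwards [eventually_mem_nhdsWithin] with t (ht : 0 < t)
  calc t⁻¹ * ∫ u in (0:ℝ)..t * b, φ u ≤ t⁻¹ * (t * b * φ (t * b)) :=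
        mul_le_mul_of_nonneg_left (integral_le_mul hφc hφi hφm (mul_pos ht hb)) (inv_nonneg.2 ht.le)
    _ = b * φ (t * b) := by field_simp

lemma exists_mul_sub_le_integral (hφc : ContinuousOn φ (Ioi 0)) (hφi : IntegrableOn φ (Ioc 0 1))
    (hφm : MonotoneOn φ (Ioi 0)) (hφ : Tendsto φ atTop atTop) (c : ℝ) :
    ∃ C, ∀ s, 0 ≤ s → c * s - C ≤ ∫ u in (0:ℝ)..s, φ u := by
  obtain ⟨u, hcu, hu⟩ := ((hφ.eventually_ge_atTop c).and (eventually_gt_atTop 0)).exists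
  refine ⟨u * φ u - ∫ t in (0:ℝ)..u, φ t, fun s hs => ?_⟩
  have := integral_add_mul_sub_le hφc hφi hφm hu hs
  nlinarith

end Primitive

section FreeEnergy

variable {φ : ℝ → ℝ} {ι : Type*}

lemma isCompact_box (R : ℝ) : IsCompact {x : EuclideanSpace ℝ ι | ∀ l, x l ∈ Icc 0 R} := by
  have := (EuclideanSpace.equiv ι ℝ).toHomeomorph.isCompact_preimage.2
    (isCompact_univ_pi fun _ : ι => isCompact_Icc (a := (0:ℝ)) (b := R))
  simpa [Set.preimage, Set.pi] using this

def stoichiometricClass (D : Submodule ℝ (EuclideanSpace ℝ ι)) (p : EuclideanSpace ℝ ι) :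
    Set (EuclideanSpace ℝ ι) :=
  {x | (∀ k, 0 ≤ x k) ∧ x - p ∈ D}

lemma convex_stoichiometricClass (D : Submodule ℝ (EuclideanSpace ℝ ι))
    (p : EuclideanSpace ℝ ι) : Convex ℝ (stoichiometricClass D p) := by
  intro x hx z hz a b ha hb hab
  refine ⟨fun k => ?_, ?_⟩
  · simpa using add_nonneg (mul_nonneg ha (hx.1 k)) (mul_nonneg hb (hz.1 k))
  · have : a • x + b • z - p = a • (x - p) + b • (z - p) := by
      rw [smul_sub, smul_sub, sub_add_sub_comm, ← add_smul, hab, one_smul]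
    rw [this]
    exact D.add_mem (D.smul_mem a hx.2) (D.smul_mem b hz.2)

variable [Fintype ι]

noncomputable def freeEnergy (φ : ℝ → ℝ) (y x : EuclideanSpace ℝ ι) : ℝ :=
  ∑ l, ((∫ u in (0:ℝ)..x l, φ u) - y l * x l)

def freeEnergyGrad (φ : ℝ → ℝ) (y x : EuclideanSpace ℝ ι) : EuclideanSpace ℝ ι :=
  WithLp.toLp 2 fun l => φ (x l) - y l

lemma isClosed_stoichiometricClass (D : Submodule ℝ (EuclideanSpace ℝ ι))
    (p : EuclideanSpace ℝ ι) : IsClosed (stoichiometricClass D p) := by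
  simp only [stoichiometricClass, ofPred_and, ofPred_forall]
  exact (isClosed_iInter fun k => isClosed_le continuous_const (by fun_prop)).inter
    (D.closed_of_finiteDimensional.preimage (by fun_prop))

lemma continuousOn_freeEnergy (hφc : ContinuousOn φ (Ioi 0)) (hφi : IntegrableOn φ (Ioc 0 1))
    (y : EuclideanSpace ℝ ι) (R : ℝ) :
    ContinuousOn (freeEnergy φ y) {x | ∀ l, x l ∈ Icc 0 R} := by
  refine continuousOn_finsetSum _ fun l _ => ContinuousOn.sub ?_ (by fun_prop)
  exact (continuousOn_integral hφc hφi R).comp (by fun_prop) fun x hx => hx l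

lemma exists_isMinOn_freeEnergy (hφc : ContinuousOn φ (Ioi 0)) (hφi : IntegrableOn φ (Ioc 0 1))
    (hφm : MonotoneOn φ (Ioi 0)) (hφ : Tendsto φ atTop atTop) (y : EuclideanSpace ℝ ι)
    {S : Set (EuclideanSpace ℝ ι)} (hS : IsClosed S) (hS0 : ∀ x ∈ S, ∀ k, 0 ≤ x k)
    {q : EuclideanSpace ℝ ι} (hq : q ∈ S) : ∃ x ∈ S, IsMinOn (freeEnergy φ y) S x := by
  choose C hC using fun l => exists_mul_sub_le_integral hφc hφi hφm hφ (y l + 1)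
  set R := freeEnergy φ y q + ∑ l, C l
  have hbox : ∀ x ∈ S, freeEnergy φ y x ≤ freeEnergy φ y q → ∀ l, x l ∈ Icc 0 R := by
    intro x hx hxq l
    have hlow : ∑ l, x l - ∑ l, C l ≤ freeEnergy φ y x := by
      rw [freeEnergy, ← Finset.sum_sub_distrib]
      exact Finset.sum_le_sum fun l _ => by linarith [hC l (x l) (hS0 x hx l)]
    have := Finset.single_le_sum (fun l _ => hS0 x hx l) (Finset.mem_univ l)
    exact ⟨hS0 x hx l, by linarith⟩
  have hqbox := hbox q hq le_rfl
  obtain ⟨x, ⟨hxS, -⟩, hx⟩ := ((isCompact_box R).inter_left hS).exists_isMinOn ⟨q, hq, hqbox⟩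
    ((continuousOn_freeEnergy hφc hφi y R).mono inter_subset_right)
  refine ⟨x, hxS, fun z hz => ?_⟩
  by_cases hzq : freeEnergy φ y z ≤ freeEnergy φ y q
  · exact hx ⟨hz, hbox z hz hzq⟩
  · exact (hx ⟨hq, hqbox⟩).trans (le_of_not_ge hzq)

lemma hasDerivAt_integral_sub_mul_line (hφc : ContinuousOn φ (Ioi 0))
    (hφi : IntegrableOn φ (Ioc 0 1)) {a : ℝ} (ha : 0 < a) (b c : ℝ) :
    HasDerivAt (fun t => (∫ u in (0:ℝ)..a + t * b, φ u) - c * (a + t * b)) ((φ a - c) * b) 0 := by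
  have hline : HasDerivAt (fun t : ℝ => a + t * b) b 0 := by
    simpa using ((hasDerivAt_id (0:ℝ)).mul_const b).const_add a
  have hφa : HasDerivAt (fun t => ∫ u in (0:ℝ)..t, φ u) (φ a) (a + 0 * b) := by
    simpa using hasDerivAt_integral_of_pos hφc hφi ha
  have := (hφa.comp 0 hline).sub (hline.const_mul c)
  rwa [← sub_mul] at this

lemma hasDerivAt_freeEnergy_line (hφc : ContinuousOn φ (Ioi 0)) (hφi : IntegrableOn φ (Ioc 0 1))
    (y : EuclideanSpace ℝ ι) {x : EuclideanSpace ℝ ι} (hx : ∀ l, 0 < x l)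
    (d : EuclideanSpace ℝ ι) :
    HasDerivAt (fun t : ℝ => freeEnergy φ y (x + t • d)) (inner ℝ d (freeEnergyGrad φ y x)) 0 := by
  have hsum : inner ℝ d (freeEnergyGrad φ y x) = ∑ l, (φ (x l) - y l) * d l := by
    simp [freeEnergyGrad, PiLp.inner_apply]
  have hfun : (fun t : ℝ => freeEnergy φ y (x + t • d)) =
      fun t => ∑ l, ((∫ u in (0:ℝ)..x l + t * d l, φ u) - y l * (x l + t * d l)) := by
    ext t
    simp [freeEnergy]
  rw [hsum, hfun]
  exact HasDerivAt.fun_sum fun l _ => hasDerivAt_integral_sub_mul_line hφc hφi (hx l) (d l) (y l)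

lemma pos_of_isMinOn_freeEnergy (hφc : ContinuousOn φ (Ioi 0)) (hφi : IntegrableOn φ (Ioc 0 1))
    (hφm : MonotoneOn φ (Ioi 0)) (hφ0 : Tendsto φ (𝓝[>] 0) atBot) (y : EuclideanSpace ℝ ι)
    {S : Set (EuclideanSpace ℝ ι)} (hS : Convex ℝ S) (hS0 : ∀ x ∈ S, ∀ k, 0 ≤ x k)
    {q : EuclideanSpace ℝ ι} (hq : q ∈ S) (hqpos : ∀ k, 0 < q k) {x : EuclideanSpace ℝ ι}
    (hx : x ∈ S) (hmin : IsMinOn (freeEnergy φ y) S x) (k : ι) : 0 < x k := by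
  by_contra! hk
  set d := q - x
  let G : ι → ℝ → ℝ := fun l t => (∫ u in (0:ℝ)..x l + t * d l, φ u) - y l * (x l + t * d l)
  let F : ι → ℝ → ℝ := fun l t => t⁻¹ * (G l t - G l 0)
  have hslope : ∀ t : ℝ, ∑ l, F l t = t⁻¹ * (freeEnergy φ y (x + t • d) - freeEnergy φ y x) := by
    intro t
    simp only [F, G, freeEnergy, ← Finset.mul_sum, ← Finset.sum_sub_distrib, PiLp.add_apply,
      PiLp.smul_apply, smul_eq_mul, zero_mul, add_zero]
  have hnonneg : ∀ᶠ t in 𝓝[>] 0, 0 ≤ ∑ l, F l t := by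
    filter_upwards [Ioc_mem_nhdsGT one_pos] with t ht
    rw [hslope]
    exact mul_nonneg (inv_nonneg.2 ht.1.le)
      (sub_nonneg.2 (hmin (hS.add_smul_sub_mem hx hq ⟨ht.1.le, ht.2⟩)))
  -- at a vanishing coordinate the slope is `-∞`, since `∫₀ˢ φ ≤ s φ(s)` and `φ → -∞` at `0`
  have hzero : ∀ l, x l = 0 → Tendsto (F l) (𝓝[>] 0) atBot := by
    intro l hl
    have hdl : d l = q l := by simp [d, hl]
    refine (tendsto_atBot_add_const_right _ (-(y l * q l))
      (tendsto_inv_mul_integral_atBot hφc hφi hφm hφ0 (hqpos l))).congr' ?_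
    filter_upwards [self_mem_nhdsWithin] with t (ht : 0 < t)
    simp only [F, G, hl, hdl, zero_add, zero_mul, intervalIntegral.integral_same]
    field_simp
    ring
  have hpos : ∀ l, 0 < x l → Tendsto (F l) (𝓝[>] 0) (𝓝 ((φ (x l) - y l) * d l)) := by
    intro l hl
    have := hasDerivAt_iff_tendsto_slope_zero.1
      (hasDerivAt_integral_sub_mul_line hφc hφi hl (d l) (y l))
    simpa [F, G] using this.mono_left (nhdsGT_le_nhdsNE 0)
  have hbdd : ∀ l, IsBoundedUnder (· ≤ ·) (𝓝[>] 0) (F l) := fun l => by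
    rcases (hS0 x hx l).eq_or_lt with hl | hl
    · exact (hzero l hl.symm).isBoundedUnder_le_atBot
    · exact (hpos l hl).isBoundedUnder_le
  obtain ⟨t, ht0, htneg⟩ := (hnonneg.and
    ((Tendsto.sum_atBot hbdd (hzero k (le_antisymm hk (hS0 x hx k)))).eventually_lt_atBot 0)).exists
  exact ht0.not_gt htneg

lemma freeEnergyGrad_mem_orthogonal_of_isMinOn (hφc : ContinuousOn φ (Ioi 0))
    (hφi : IntegrableOn φ (Ioc 0 1)) (y : EuclideanSpace ℝ ι)
    {D : Submodule ℝ (EuclideanSpace ℝ ι)} {p x : EuclideanSpace ℝ ι} (hx : ∀ k, 0 < x k)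
    (hxS : x ∈ stoichiometricClass D p)
    (hmin : IsMinOn (freeEnergy φ y) (stoichiometricClass D p) x) :
    freeEnergyGrad φ y x ∈ Dᗮ := by
  refine (Submodule.mem_orthogonal _ _).2 fun d hd =>
    IsLocalMin.hasDerivAt_eq_zero ?_ (hasDerivAt_freeEnergy_line hφc hφi y hx d)
  have hcoord : ∀ l, ∀ᶠ t in 𝓝 (0:ℝ), 0 < x l + t * d l := fun l =>
    ((continuous_const.add (continuous_id.mul continuous_const)).tendsto 0).eventually
      (lt_mem_nhds (by simpa using hx l))
  filter_upwards [eventually_all.2 hcoord] with t ht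
  have hmem : x + t • d ∈ stoichiometricClass D p := by
    refine ⟨fun l => by simpa using (ht l).le, ?_⟩
    rw [add_sub_right_comm]
    exact D.add_mem hxS.2 (D.smul_mem t hd)
  simpa using hmin hmem

lemma eq_of_freeEnergyGrad_mem_orthogonal (hφ : StrictMonoOn φ (Ioi 0)) (y : EuclideanSpace ℝ ι)
    {D : Submodule ℝ (EuclideanSpace ℝ ι)} {x z : EuclideanSpace ℝ ι} (hx : ∀ k, 0 < x k)
    (hz : ∀ k, 0 < z k) (hxz : z - x ∈ D) (hgx : freeEnergyGrad φ y x ∈ Dᗮ)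
    (hgz : freeEnergyGrad φ y z ∈ Dᗮ) : z = x := by
  have hsum : ∑ k, (z k - x k) * (φ (z k) - φ (x k)) = 0 := by
    have := Submodule.inner_right_of_mem_orthogonal hxz (Dᗮ.sub_mem hgz hgx)
    simpa [freeEnergyGrad, PiLp.inner_apply, mul_comm] using this
  have hterm : ∀ k, 0 ≤ (z k - x k) * (φ (z k) - φ (x k)) := fun k => by
    rcases eq_or_ne (z k) (x k) with h | h
    · simp [h]
    · exact (hφ.sub_mul_sub_pos (hz k) (hx k) h).le
  ext k
  by_contra h
  exact (hφ.sub_mul_sub_pos (hz k) (hx k) h).ne'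
    ((Finset.sum_eq_zero_iff_of_nonneg fun k _ => hterm k).1 hsum k (Finset.mem_univ k))

end FreeEnergy

section Theta

variable {θ : ℝ → ℝ}

lemma StrictMonoOn.pos_of_map_zero (hθ : StrictMonoOn θ (Ici 0)) (hθ0 : θ 0 = 0) {s : ℝ}
    (hs : 0 < s) : 0 < θ s :=
  hθ0 ▸ hθ self_mem_Ici hs.le hs

lemma strictMonoOn_log_comp (hθ0 : θ 0 = 0) (hθ : StrictMonoOn θ (Ici 0)) :
    StrictMonoOn (fun s => Real.log (θ s)) (Ioi 0) := fun _ ha _ hb hab =>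
  Real.log_lt_log (hθ.pos_of_map_zero hθ0 ha) (hθ (mem_Ici.2 ha.le) (mem_Ici.2 hb.le) hab)

lemma continuousOn_log_comp (hθc : Continuous θ) (hθ0 : θ 0 = 0) (hθ : StrictMonoOn θ (Ici 0)) :
    ContinuousOn (fun s => Real.log (θ s)) (Ioi 0) := fun _ hs =>
  (hθc.continuousAt.log (hθ.pos_of_map_zero hθ0 hs).ne').continuousWithinAt

lemma integrableOn_log_comp (hθc : Continuous θ) (hθ0 : θ 0 = 0) (hθ : StrictMonoOn θ (Ici 0))
    (hθi : IntegrableOn (fun s => |Real.log (θ s)|) (Ioc 0 1)) :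
    IntegrableOn (fun s => Real.log (θ s)) (Ioc 0 1) :=
  (integrable_norm_iff (((continuousOn_log_comp hθc hθ0 hθ).mono Ioc_subset_Ioi_self)
    |>.aestronglyMeasurable measurableSet_Ioc)).1 hθi

lemma tendsto_log_comp_nhdsGT_zero (hθc : Continuous θ) (hθ0 : θ 0 = 0)
    (hθ : StrictMonoOn θ (Ici 0)) : Tendsto (fun s => Real.log (θ s)) (𝓝[>] 0) atBot :=
  Real.tendsto_log_nhdsGT_zero.comp <| tendsto_nhdsWithin_of_tendsto_nhds_of_eventually_within _
    (hθ0 ▸ hθc.tendsto 0 |>.mono_left nhdsWithin_le_nhds)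
    (eventually_mem_nhdsWithin.mono fun _ hs => hθ.pos_of_map_zero hθ0 hs)

lemma tendsto_log_comp_atTop (hθ : StrictMonoOn θ (Ici 0))
    (hθonto : ∀ r : ℝ, 0 ≤ r → ∃ y : ℝ, 0 ≤ y ∧ θ y = r) :
    Tendsto (fun s => Real.log (θ s)) atTop atTop := by
  refine Real.tendsto_log_atTop.comp (tendsto_atTop_atTop.2 fun b => ?_)
  obtain ⟨y, hy, hθy⟩ := hθonto (max b 0) (le_max_right b 0)
  exact ⟨y, fun a ha => (le_max_left b 0).trans (hθy ▸ hθ.monotoneOn hy (hy.trans ha) ha)⟩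

end Theta

section MassAction

variable {ι κ : Type*} [Fintype ι]

def stoichiometricSubspace (B : Matrix ι κ ℝ) : Submodule ℝ (EuclideanSpace ℝ ι) :=
  Submodule.span ℝ {v | ∃ i j : κ, v = fun k => B k i - B k j}

lemma mem_orthogonal_stoichiometricSubspace_iff [Nonempty κ] (B : Matrix ι κ ℝ)
    (v : EuclideanSpace ℝ ι) :
    v ∈ (stoichiometricSubspace B)ᗮ ↔ ∃ c, ∀ j, (v.ofLp ᵥ* B) j = c := by
  have hgen : ∀ i j, ∀ u : EuclideanSpace ℝ ι, u.ofLp = (fun k => B k i - B k j) →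
      inner ℝ u v = (v.ofLp ᵥ* B) i - (v.ofLp ᵥ* B) j := by
    intro i j u hu
    simp [PiLp.inner_apply, hu, vecMul, dotProduct, sub_mul, Finset.sum_sub_distrib, mul_comm]
  rw [stoichiometricSubspace, Submodule.mem_orthogonal_span_iff]
  constructor
  · intro h
    obtain ⟨j₀⟩ := ‹Nonempty κ›
    refine ⟨(v.ofLp ᵥ* B) j₀, fun j => sub_eq_zero.1 ?_⟩
    have := h (WithLp.toLp 2 fun k => B k j - B k j₀) ⟨j, j₀, rfl⟩
    rwa [hgen j j₀ _ rfl] at this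
  · rintro ⟨c, hc⟩ u ⟨i, j, hu⟩
    rw [hgen i j u hu, hc, hc, sub_self]

noncomputable def monomial (θ : ℝ → ℝ) (B : Matrix ι κ ℝ) (x : EuclideanSpace ℝ ι) : κ → ℝ :=
  fun j => ∏ l, θ (x l) ^ B l j

variable {θ : ℝ → ℝ} {B : Matrix ι κ ℝ} {x : EuclideanSpace ℝ ι}

lemma monomial_pos (hθx : ∀ l, 0 < θ (x l)) (j : κ) : 0 < monomial θ B x j :=
  Finset.prod_pos fun l _ => Real.rpow_pos_of_pos (hθx l) _

lemma log_monomial (hθx : ∀ l, 0 < θ (x l)) (j : κ) :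
    Real.log (monomial θ B x j) = ((fun l => Real.log (θ (x l))) ᵥ* B) j := by
  rw [monomial, Real.log_prod fun l _ => (Real.rpow_pos_of_pos (hθx l) _).ne']
  simp [Real.log_rpow (hθx _), vecMul, dotProduct, mul_comm]

noncomputable def massActionField [Fintype κ] [DecidableEq κ] (θ : ℝ → ℝ) (A : Matrix κ κ ℝ)
    (B : Matrix ι κ ℝ) (x : EuclideanSpace ℝ ι) : EuclideanSpace ℝ ι :=
  WithLp.toLp 2 (B *ᵥ (laplacian A *ᵥ monomial θ B x))

lemma massActionField_eq_zero_iff [Fintype κ] [Nonempty κ] [DecidableEq κ]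
    (hB : B.rank = Fintype.card κ) {A : Matrix κ κ ℝ} {ρ : κ → ℝ} (hρ : ∀ j, 0 < ρ j)
    (hker : ∀ ψ, laplacian A *ᵥ ψ = 0 ↔ ∃ t : ℝ, ψ = t • ρ) {y : EuclideanSpace ℝ ι}
    (hy : y.ofLp ᵥ* B = fun j => Real.log (ρ j)) (hθx : ∀ l, 0 < θ (x l)) :
    massActionField θ A B x = 0 ↔
      freeEnergyGrad (fun s => Real.log (θ s)) y x ∈ (stoichiometricSubspace B)ᗮ := by
  have hgrad : (freeEnergyGrad (fun s => Real.log (θ s)) y x).ofLp ᵥ* B =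
      fun j => Real.log (monomial θ B x j) - Real.log (ρ j) := by
    ext j
    rw [log_monomial hθx, ← congrFun hy j, ← Pi.sub_apply, ← sub_vecMul]
    rfl
  rw [massActionField, WithLp.toLp_eq_zero,
    (mulVec_injective_of_rank_eq_card hB).eq_iff' (mulVec_zero B), hker,
    exists_eq_smul_iff_exists_log_sub_log (monomial_pos hθx) hρ,
    mem_orthogonal_stoichiometricSubspace_iff, hgrad]

end MassAction

theorem stmt_1
    (n m : ℕ) (hm : 0 < m)
    (θ : ℝ → ℝ)
    (hθlip : LocallyLipschitz θ)
    (hθ0 : θ 0 = 0)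
    (hθmono : StrictMonoOn θ (Set.Ici (0:ℝ)))
    (hθonto : ∀ r : ℝ, 0 ≤ r → ∃ y : ℝ, 0 ≤ y ∧ θ y = r)
    (hθint : MeasureTheory.IntegrableOn (fun y => |Real.log (θ y)|) (Set.Ioc (0:ℝ) 1))
    (A : Matrix (Fin m) (Fin m) ℝ)
    (hAnn : ∀ i j, 0 ≤ A i j)
    (hAirr : ∀ i j, 0 < ((1 + A) ^ (m - 1)) i j)
    (B : Matrix (Fin n) (Fin m) ℝ)
    (hBrank : B.rank = m)
    (f : EuclideanSpace ℝ (Fin n) → EuclideanSpace ℝ (Fin n))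
    (hf : ∀ x : EuclideanSpace ℝ (Fin n), ∀ k : Fin n,
      f x k = ∑ i : Fin m, ∑ j : Fin m,
        A i j * (∏ l : Fin n, θ (x l) ^ (B l j)) * (B k i - B k j))
    (p : EuclideanSpace ℝ (Fin n))
    (D : Submodule ℝ (EuclideanSpace ℝ (Fin n)))
    (hD : D = Submodule.span ℝ
      {v : EuclideanSpace ℝ (Fin n) | ∃ i j : Fin m, v = fun k => B k i - B k j})
    (S : Set (EuclideanSpace ℝ (Fin n)))
    (hS : S = {x : EuclideanSpace ℝ (Fin n) | (∀ k, 0 ≤ x k) ∧ x - p ∈ D})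
    (hSpos : ∃ q ∈ S, ∀ k, 0 < q k)
    :
    ∃! xbar : EuclideanSpace ℝ (Fin n),
      xbar ∈ S ∧ (∀ k, 0 < xbar k) ∧ f xbar = 0 := by
  obtain rfl : D = stoichiometricSubspace B := hD
  obtain rfl : S = stoichiometricClass (stoichiometricSubspace B) p := hS
  obtain rfl : f = massActionField θ A B := funext fun x => PiLp.ext fun k => by
    rw [hf, sum_sum_mul_sub_eq_mulVec_laplacian]
    rfl
  have : Nonempty (Fin m) := ⟨⟨0, hm⟩⟩
  have hθc := hθlip.continuous
  have hφc := continuousOn_log_comp hθc hθ0 hθmono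
  have hφi := integrableOn_log_comp hθc hθ0 hθmono hθint
  have hφm := strictMonoOn_log_comp hθ0 hθmono
  obtain ⟨ρ, hρ, hker⟩ := exists_pos_ker_laplacian hAnn hAirr
  have hBrank' : B.rank = Fintype.card (Fin m) := by rw [hBrank, Fintype.card_fin]
  obtain ⟨y, hy⟩ := vecMul_surjective_of_rank_eq_card hBrank' fun j => Real.log (ρ j)
  have hequil (x : EuclideanSpace ℝ (Fin n)) (hx : ∀ k, 0 < x k) :=
    massActionField_eq_zero_iff hBrank' hρ hker (y := WithLp.toLp 2 y) hy
      fun l => hθmono.pos_of_map_zero hθ0 (hx l)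
  obtain ⟨q, hq, hqpos⟩ := hSpos
  obtain ⟨x, hxS, hxmin⟩ := exists_isMinOn_freeEnergy hφc hφi hφm.monotoneOn
    (tendsto_log_comp_atTop hθmono hθonto) _ (isClosed_stoichiometricClass _ p) (fun _ h => h.1) hq
  have hxpos := pos_of_isMinOn_freeEnergy hφc hφi hφm.monotoneOn
    (tendsto_log_comp_nhdsGT_zero hθc hθ0 hθmono) _ (convex_stoichiometricClass _ p)
    (fun _ h => h.1) hq hqpos hxS hxmin
  have hgx := freeEnergyGrad_mem_orthogonal_of_isMinOn hφc hφi _ hxpos hxS hxmin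
  refine ⟨x, ⟨hxS, hxpos, (hequil x hxpos).2 hgx⟩, fun z ⟨hzS, hzpos, hfz⟩ => ?_⟩
  refine eq_of_freeEnergyGrad_mem_orthogonal hφm _ hxpos hzpos ?_ hgx ((hequil z hzpos).1 hfz)
  simpa using Submodule.sub_mem _ hzS.2 hxS.2
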